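/- The translation subgroup T = G₆ ∩ (ℝ³ × {I}) of G₆ equals the subgroup of G₆ generated by x², y² and z²; it is free abelian of rank 3 (with basis {x², y², z²}), and the quotient G₆/T is isomorphic to (ℤ/2ℤ)². -/

import Mathlib

/-! `Aff(3) = ℝ³ ⋊ GL(3,ℝ)`, realized as the group of affine self-equivalences of `ℝ³`
(with multiplication given by composition, so that `(v,A)(w,B) = (v + Aw, AB)`). -/

abbrev V3 : Type := Fin 3 → ℝ
abbrev Aff3 : Type := V3 ≃ᵃ[ℝ] V3

/-- The linear self-equivalence of `ℝ³` given by a diagonal matrix with entries `±1`. -/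
noncomputable def diagLin (d : Fin 3 → ℝ) (hd : ∀ i, d i * d i = 1) : V3 ≃ₗ[ℝ] V3 where
  toFun v := fun i => d i * v i
  invFun v := fun i => d i * v i
  map_add' u v := by funext i; simp [mul_add]
  map_smul' c v := by funext i; simp [smul_eq_mul]; ring
  left_inv v := by funext i; simp [← mul_assoc, hd i]
  right_inv v := by funext i; simp [← mul_assoc, hd i]

lemma sq_one_X : ∀ i, (![(1:ℝ),-1,-1]) i * (![(1:ℝ),-1,-1]) i = 1 := by
  intro i; fin_cases i <;> norm_num

lemma sq_one_Y : ∀ i, (![(-1:ℝ),1,-1]) i * (![(-1:ℝ),1,-1]) i = 1 := by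
  intro i; fin_cases i <;> norm_num

/-- The affine transformation `x = (½e₁, X)`, acting by `w ↦ Xw + ½e₁`,
where `X = diag[1,−1,−1]`. -/
noncomputable def affx : Aff3 :=
  ((diagLin ![1,-1,-1] sq_one_X).toAffineEquiv).trans
    (AffineEquiv.constVAdd ℝ V3 ![1/2, 0, 0])

/-- The affine transformation `y = (½(e₂−e₃), Y)`, acting by `w ↦ Yw + ½(e₂−e₃)`,
where `Y = diag[−1,1,−1]`. -/
noncomputable def affy : Aff3 :=
  ((diagLin ![-1,1,-1] sq_one_Y).toAffineEquiv).trans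
    (AffineEquiv.constVAdd ℝ V3 ![0, 1/2, -1/2])

/-- `z = xy = (½(e₁−e₂+e₃), Z)`. -/
noncomputable def affz : Aff3 := affx * affy

/-- The Hantzsche–Wendt group `G₆`, the subgroup of `Aff(3)` generated by `x` and `y`. -/
noncomputable def G6 : Subgroup Aff3 := Subgroup.closure {affx, affy}

/-- The translation subgroup `T = G₆ ∩ (ℝ³ × {I})`: the elements of `G₆`
whose linear part is the identity. -/
noncomputable def TT : Subgroup Aff3 :=
  G6 ⊓ (AffineEquiv.linearHom : Aff3 →* (V3 ≃ₗ[ℝ] V3)).ker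

lemma affx_mem : affx ∈ G6 := Subgroup.subset_closure (by simp)
lemma affy_mem : affy ∈ G6 := Subgroup.subset_closure (by simp)

/-- `x` as an element of `G₆`. -/
noncomputable def xg : G6 := ⟨affx, affx_mem⟩
/-- `y` as an element of `G₆`. -/
noncomputable def yg : G6 := ⟨affy, affy_mem⟩
/-- `z = xy` as an element of `G₆`. -/
noncomputable def zg : G6 := xg * yg

/-! The squares `x², y², z²` are the translations by `e₁, e₂, e₃`, and conjugation by `x` or `y`
only changes signs of coordinates, so the translations by `ℤ³` form a normal subgroup `N`.
From `x², y² ∈ N`, `xy = z` and `xz, yx, yz ∈ N{1,x,y,z}`, every element of `G₆` lies in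
`N{1,x,y,z}`. The linear parts of `1, x, y, z` are the four sign matrices
`diag(a, b, ab)`, `a, b = ±1`, so the linear part restricted to `G₆` has kernel `N` and image
`{±1}² ≅ (ℤ/2ℤ)²`. -/

namespace AffineEquiv

variable {k V P : Type*} [Ring k] [AddCommGroup V] [Module k V] [AddTorsor V P]

theorem mul_constVAdd_mul_inv (e : P ≃ᵃ[k] P) (v : V) :
    e * constVAdd k P v * e⁻¹ = constVAdd k P (e.linear v) := by
  ext p
  simp [mul_def, inv_def, map_vadd]

theorem constVAddHom_injective : Function.Injective (constVAddHom k P) := by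
  intro v w h
  obtain ⟨p⟩ := AddTorsor.nonempty (G := V) (P := P)
  exact Multiplicative.toAdd.injective (vadd_right_cancel p (congrArg (· p) h))

end AffineEquiv

theorem MonoidHom.exists_surjective_ker_eq_of_range_mulEquiv {G H M : Type*} [Group G]
    [Group H] [MulOneClass M] (f : G →* H) (e : f.range ≃* M) :
    ∃ ψ : G →* M, Function.Surjective ψ ∧ ψ.ker = f.ker :=
  ⟨(e : f.range →* M).comp f.rangeRestrict, e.surjective.comp f.rangeRestrict_surjective, by
    rw [MonoidHom.ker_mulEquiv_comp, MonoidHom.ker_rangeRestrict]⟩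

noncomputable def unitsIntMulEquiv : ℤˣ ≃* Multiplicative (ZMod 2) :=
  mulEquivOfPrimeCardEq (p := 2) (Nat.card_eq_fintype_card.trans Fintype.card_units_int)
    (Nat.card_eq_fintype_card.trans (ZMod.card 2))

open AffineEquiv

def intVec : ℤ × ℤ × ℤ →+ V3 where
  toFun m := ![(m.1 : ℝ), m.2.1, m.2.2]
  map_zero' := by ext i; fin_cases i <;> simp
  map_add' m n := by ext i; fin_cases i <;> simp

theorem intVec_injective : Function.Injective intVec := by
  intro m n h
  have h0 := congrFun h 0
  have h1 := congrFun h 1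
  have h2 := congrFun h 2
  simp [intVec] at h0 h1 h2
  ext <;> assumption

noncomputable def intTransl : Multiplicative (ℤ × ℤ × ℤ) →* Aff3 :=
  (constVAddHom ℝ V3).comp intVec.toMultiplicative

theorem intTransl_apply (m : ℤ × ℤ × ℤ) :
    intTransl (.ofAdd m) = constVAdd ℝ V3 ![(m.1 : ℝ), m.2.1, m.2.2] := rfl

theorem intTransl_injective : Function.Injective intTransl :=
  constVAddHom_injective.comp intVec_injective

noncomputable def signDiag : ℤˣ × ℤˣ →* (V3 ≃ₗ[ℝ] V3) where
  toFun p := diagLin (fun i => (![p.1, p.2, p.1 * p.2] i : ℤ)) fun i => by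
    exact_mod_cast Int.units_coe_mul_self _
  map_one' := by ext v i; fin_cases i <;> simp [diagLin]
  map_mul' p q := by ext v i; fin_cases i <;> simp [diagLin] <;> ring

theorem signDiag_apply (p : ℤˣ × ℤˣ) (v : V3) :
    signDiag p v = ![p.1 * v 0, p.2 * v 1, p.1 * p.2 * v 2] := by
  ext i; fin_cases i <;> simp [signDiag, diagLin]

theorem signDiag_injective : Function.Injective signDiag := by
  intro p q h
  have h0 := congrFun (congrArg (· (fun _ => 1)) h) 0
  have h1 := congrFun (congrArg (· (fun _ => 1)) h) 1
  simp [signDiag_apply] at h0 h1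
  exact Prod.ext (Units.ext h0) (Units.ext h1)

theorem closure_signs_eq_top : Subgroup.closure {((1 : ℤˣ), (-1 : ℤˣ)), (-1, 1)} = ⊤ := by
  refine eq_top_iff.2 fun ⟨a, b⟩ _ => ?_
  have gen₁ : ((1 : ℤˣ), (-1 : ℤˣ)) ∈ Subgroup.closure {((1 : ℤˣ), (-1 : ℤˣ)), (-1, 1)} :=
    Subgroup.subset_closure (by simp)
  have gen₂ : ((-1 : ℤˣ), (1 : ℤˣ)) ∈ Subgroup.closure {((1 : ℤˣ), (-1 : ℤˣ)), (-1, 1)} :=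
    Subgroup.subset_closure (by simp)
  rcases Int.units_eq_one_or a with rfl | rfl <;> rcases Int.units_eq_one_or b with rfl | rfl
  · exact one_mem _
  · exact gen₁
  · exact gen₂
  · simpa using mul_mem gen₁ gen₂

theorem affx_apply (p : V3) : affx p = ![1/2 + p 0, -p 1, -p 2] := by
  ext i; fin_cases i <;> simp [affx, diagLin]

theorem affy_apply (p : V3) : affy p = ![-p 0, p 1 + 1/2, -p 2 - 1/2] := by
  ext i; fin_cases i <;> simp [affy, diagLin] <;> ring

theorem affz_apply (p : V3) : affz p = ![-p 0 + 1/2, -p 1 - 1/2, p 2 + 1/2] := by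
  ext i; fin_cases i <;> simp [affz, mul_def, affx_apply, affy_apply] <;> ring

theorem linear_affx : affx.linear = signDiag (1, -1) := by
  ext v i
  simp only [signDiag_apply]
  show ![1, -1, -1] i * v i = _
  fin_cases i <;> simp

theorem linear_affy : affy.linear = signDiag (-1, 1) := by
  ext v i
  simp only [signDiag_apply]
  show ![-1, 1, -1] i * v i = _
  fin_cases i <;> simp

theorem linear_affz : affz.linear = signDiag (-1, -1) := by
  rw [affz, ← linearHom_apply, map_mul, linearHom_apply, linearHom_apply, linear_affx,
    linear_affy, ← map_mul]
  rfl

theorem affx_sq : affx ^ 2 = intTransl (.ofAdd (1, 0, 0)) := by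
  ext p i
  fin_cases i <;> simp [pow_two, mul_def, affx_apply, intTransl_apply]
  ring

theorem affy_sq : affy ^ 2 = intTransl (.ofAdd (0, 1, 0)) := by
  ext p i
  fin_cases i <;> simp [pow_two, mul_def, affy_apply, intTransl_apply]
  ring

theorem affz_sq : affz ^ 2 = intTransl (.ofAdd (0, 0, 1)) := by
  ext p i
  fin_cases i <;> simp [pow_two, mul_def, affz_apply, intTransl_apply]
  ring

theorem affx_mul_affz : affx * affz = intTransl (.ofAdd (1, 0, 0)) * affy := by
  ext p i
  fin_cases i <;> simp [mul_def, affx_apply, affy_apply, affz_apply, intTransl_apply] <;> ring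

theorem affy_mul_affx : affy * affx = intTransl (.ofAdd (-1, 1, -1)) * affz := by
  ext p i
  fin_cases i <;> simp [mul_def, affx_apply, affy_apply, affz_apply, intTransl_apply] <;> ring

theorem affy_mul_affz : affy * affz = intTransl (.ofAdd (-1, 0, -1)) * affx := by
  ext p i
  fin_cases i <;> simp [mul_def, affx_apply, affy_apply, affz_apply, intTransl_apply] <;> ring

theorem affx_mul_intTransl_mul_inv (m : ℤ × ℤ × ℤ) :
    affx * intTransl (.ofAdd m) * affx⁻¹ = intTransl (.ofAdd (m.1, -m.2.1, -m.2.2)) := by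
  rw [intTransl_apply, mul_constVAdd_mul_inv, linear_affx, signDiag_apply, intTransl_apply]
  congr 1; ext i; fin_cases i <;> simp

theorem affy_mul_intTransl_mul_inv (m : ℤ × ℤ × ℤ) :
    affy * intTransl (.ofAdd m) * affy⁻¹ = intTransl (.ofAdd (-m.1, m.2.1, -m.2.2)) := by
  rw [intTransl_apply, mul_constVAdd_mul_inv, linear_affy, signDiag_apply, intTransl_apply]
  congr 1; ext i; fin_cases i <;> simp

section Generators

variable {a : Aff3} (ha : a ∈ ({affx, affy} : Set Aff3))
include ha

theorem mul_mem_range_mul_inv {t : Aff3} (ht : t ∈ intTransl.range) :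
    a * t * a⁻¹ ∈ intTransl.range := by
  obtain ⟨m, rfl⟩ := ht
  rcases ha with rfl | rfl
  · exact ⟨_, (affx_mul_intTransl_mul_inv m.toAdd).symm⟩
  · exact ⟨_, (affy_mul_intTransl_mul_inv m.toAdd).symm⟩

theorem sq_mem_range : a ^ 2 ∈ intTransl.range := by
  rcases ha with rfl | rfl
  · exact ⟨_, affx_sq.symm⟩
  · exact ⟨_, affy_sq.symm⟩

theorem exists_mul_eq_mul {w : Aff3} (hw : w ∈ ({1, affx, affy, affz} : Set Aff3)) :
    ∃ t ∈ intTransl.range, ∃ w' ∈ ({1, affx, affy, affz} : Set Aff3), a * w = t * w' := by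
  have range_mem (m) : intTransl (.ofAdd m) ∈ intTransl.range := ⟨_, rfl⟩
  rcases ha with rfl | rfl <;> rcases hw with rfl | rfl | rfl | rfl
  · exact ⟨1, one_mem _, affx, by simp, by group⟩
  · exact ⟨_, range_mem _, 1, by simp, by rw [mul_one, ← pow_two, affx_sq]⟩
  · exact ⟨1, one_mem _, affz, by simp, by rw [one_mul, affz]⟩
  · exact ⟨_, range_mem _, affy, by simp, affx_mul_affz⟩
  · exact ⟨1, one_mem _, affy, by simp, by group⟩
  · exact ⟨_, range_mem _, affz, by simp, affy_mul_affx⟩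
  · exact ⟨_, range_mem _, 1, by simp, by rw [mul_one, ← pow_two, affy_sq]⟩
  · exact ⟨_, range_mem _, affx, by simp, affy_mul_affz⟩

theorem exists_mul_mul_eq_mul {t w : Aff3} (ht : t ∈ intTransl.range)
    (hw : w ∈ ({1, affx, affy, affz} : Set Aff3)) :
    ∃ t' ∈ intTransl.range, ∃ w' ∈ ({1, affx, affy, affz} : Set Aff3), a * (t * w) = t' * w' := by
  obtain ⟨t', ht', w', hw', h⟩ := exists_mul_eq_mul ha hw
  refine ⟨a * t * a⁻¹ * t', mul_mem (mul_mem_range_mul_inv ha ht) ht', w', hw', ?_⟩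
  rw [mul_assoc _ t', ← h]
  group

end Generators

theorem exists_eq_mul_of_mem_G6 {g : Aff3} (hg : g ∈ G6) :
    ∃ t ∈ intTransl.range, ∃ w ∈ ({1, affx, affy, affz} : Set Aff3), g = t * w := by
  induction hg using Subgroup.closure_induction_left with
  | one => exact ⟨1, one_mem _, 1, by simp, by group⟩
  | mul_left a ha _ _ ih =>
    obtain ⟨t, ht, w, hw, rfl⟩ := ih
    exact exists_mul_mul_eq_mul ha ht hw
  | inv_mul_cancel a ha _ _ ih =>
    obtain ⟨t, ht, w, hw, rfl⟩ := ih
    obtain ⟨t', ht', w', hw', h⟩ := exists_mul_mul_eq_mul ha ht hw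
    -- `a⁻¹ = (a²)⁻¹ a`
    refine ⟨(a ^ 2)⁻¹ * t', mul_mem (inv_mem (sq_mem_range ha)) ht', w', hw', ?_⟩
    rw [mul_assoc, ← h]
    group

theorem closure_sq_eq_range :
    Subgroup.closure {affx ^ 2, affy ^ 2, affz ^ 2} = intTransl.range := by
  apply le_antisymm
  · rw [Subgroup.closure_le, affx_sq, affy_sq, affz_sq]
    rintro _ (rfl | rfl | rfl) <;> exact ⟨_, rfl⟩
  · rintro _ ⟨m, rfl⟩
    have hm : m = .ofAdd (1, 0, 0) ^ m.toAdd.1 * .ofAdd (0, 1, 0) ^ m.toAdd.2.1 *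
        .ofAdd (0, 0, 1) ^ m.toAdd.2.2 := by
      apply Multiplicative.toAdd.injective
      ext <;> simp
    rw [hm, map_mul, map_mul, map_zpow, map_zpow, map_zpow, ← affx_sq, ← affy_sq, ← affz_sq]
    exact mul_mem (mul_mem (zpow_mem (Subgroup.subset_closure (by simp)) _)
      (zpow_mem (Subgroup.subset_closure (by simp)) _)) (zpow_mem (Subgroup.subset_closure (by simp)) _)

theorem TT_eq_range : TT = intTransl.range := by
  apply le_antisymm
  · intro g hg
    obtain ⟨hg, hlin⟩ := Subgroup.mem_inf.1 hg
    obtain ⟨_, ⟨m, rfl⟩, w, hw, rfl⟩ := exists_eq_mul_of_mem_G6 hg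
    replace hlin : w.linear = 1 := by
      rwa [MonoidHom.mem_ker, map_mul, show linearHom (intTransl m) = 1 from rfl, one_mul] at hlin
    have signDiag_ne_one {p} (hp : p ≠ 1) : signDiag p ≠ 1 :=
      (map_ne_one_iff _ signDiag_injective).2 hp
    rcases hw with rfl | rfl | rfl | rfl
    · simp
    · exact absurd (linear_affx ▸ hlin) (signDiag_ne_one (by decide))
    · exact absurd (linear_affy ▸ hlin) (signDiag_ne_one (by decide))
    · exact absurd (linear_affz ▸ hlin) (signDiag_ne_one (by decide))
  · refine le_inf ?_ fun _ ⟨m, hm⟩ => hm ▸ MonoidHom.mem_ker.2 rfl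
    rw [← closure_sq_eq_range, Subgroup.closure_le]
    rintro _ (rfl | rfl | rfl)
    · exact pow_mem affx_mem 2
    · exact pow_mem affy_mem 2
    · exact pow_mem (mul_mem affx_mem affy_mem) 2

theorem ker_linearHom_comp_subtype : (linearHom.comp G6.subtype).ker = TT.subgroupOf G6 := by
  ext g
  simp [TT, Subgroup.mem_subgroupOf]

theorem range_linearHom_comp_subtype : (linearHom.comp G6.subtype).range = signDiag.range := by
  rw [MonoidHom.range_comp, Subgroup.range_subtype, G6, MonoidHom.map_closure, Set.image_pair,
    linearHom_apply, linearHom_apply, linear_affx, linear_affy, ← Set.image_pair,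
    ← MonoidHom.map_closure, closure_signs_eq_top, MonoidHom.range_eq_map]

theorem exists_surjective_ker_eq_TT :
    ∃ ψ : G6 →* Multiplicative (ZMod 2 × ZMod 2),
      Function.Surjective ψ ∧ ψ.ker = TT.subgroupOf G6 :=
  ker_linearHom_comp_subtype ▸ (linearHom.comp G6.subtype).exists_surjective_ker_eq_of_range_mulEquiv
    ((MulEquiv.subgroupCongr range_linearHom_comp_subtype).trans <|
      (MonoidHom.ofInjective signDiag_injective).symm.trans <|
        (unitsIntMulEquiv.prodCongr unitsIntMulEquiv).trans (MulEquiv.prodMultiplicative _ _).symm)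

/-- The translation subgroup `T = G₆ ∩ (ℝ³ × {I})` equals the subgroup
generated by `x²`, `y²` and `z²`; it is free abelian of rank 3 with basis
`{x², y², z²}` (i.e. there is an isomorphism from `ℤ³` onto `T` sending the standard
basis to `x², y², z²`), and the quotient `G₆/T` is isomorphic to `(ℤ/2ℤ)²` (i.e. there
is a surjective homomorphism from `G₆` onto `(ℤ/2ℤ)²` with kernel `T`). -/
theorem statement3 :
    TT = Subgroup.closure {affx ^ 2, affy ^ 2, affz ^ 2} ∧
    (∃ φ : Multiplicative (ℤ × ℤ × ℤ) ≃* TT,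
      ((φ (Multiplicative.ofAdd (1, 0, 0)) : Aff3) = affx ^ 2 ∧
       (φ (Multiplicative.ofAdd (0, 1, 0)) : Aff3) = affy ^ 2 ∧
       (φ (Multiplicative.ofAdd (0, 0, 1)) : Aff3) = affz ^ 2)) ∧
    (∃ ψ : G6 →* Multiplicative (ZMod 2 × ZMod 2),
      Function.Surjective ψ ∧ ψ.ker = TT.subgroupOf G6) := by
  refine ⟨TT_eq_range.trans closure_sq_eq_range.symm,
    ⟨(MonoidHom.ofInjective intTransl_injective).trans (MulEquiv.subgroupCongr TT_eq_range.symm),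
      affx_sq.symm, affy_sq.symm, affz_sq.symm⟩,
    exists_surjective_ker_eq_TT⟩
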